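/- For every integer k ≥ 2 and all distinct r, r' ∈ {0, 1, 2}, the dominating set D_r = { i ∈ ℤ/3kℤ : i ≡ r (mod 3) } of the cycle C_{3k} is not TS-reachable from D_{r'}; in particular, no single token slide transforms D_{r'} into D_r while keeping a dominating multiset, and the three sets D_0, D_1, D_2 lie in pairwise distinct connected components of the token-sliding reconfiguration graph of size-k dominating multisets of C_{3k}. -/

import Mathlib

/-!
If a token of `D_{r'}` slides from `u` to `u + d` with `d = ±1`, the vertex `u - d` is left
undominated: it is not in `D_{r'}` and differs from `u + d`; its neighbours are `u`, which has
lost its only token, and `u - 2d`, which is not in `D_{r'}`; and `u + d` is at distance `2`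
from it, which is not adjacent because `3k ≥ 6`. So no dominating multiset is one slide away
from `D_{r'}`, and since `D_{r'} ≠ D_r` nothing else is TS-reachable from it.
-/

def IsDominatingMultiset {V : Type*} (G : SimpleGraph V) (D : Multiset V) : Prop :=
  ∀ w : V, w ∈ D ∨ ∃ u ∈ D, G.Adj u w

def TokenSlide {V : Type*} [DecidableEq V] (G : SimpleGraph V) (D D' : Multiset V) : Prop :=
  ∃ u v : V, G.Adj u v ∧ u ∈ D ∧ D' = v ::ₘ D.erase u

def TSStep {V : Type*} [DecidableEq V] (G : SimpleGraph V) (D D' : Multiset V) : Prop :=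
  IsDominatingMultiset G D ∧ IsDominatingMultiset G D' ∧ TokenSlide G D D'

def TSReachable {V : Type*} [DecidableEq V] (G : SimpleGraph V) (D D' : Multiset V) : Prop :=
  Relation.ReflTransGen (TSStep G) D D'

def cycleGraph (n : ℕ) : SimpleGraph (ZMod n) where
  Adj i j := i ≠ j ∧ (i - j = 1 ∨ j - i = 1)
  symm := by
    refine ⟨fun i j hij => ?_⟩
    exact ⟨hij.1.symm, hij.2.symm⟩
  loopless := by
    refine ⟨fun i hi => ?_⟩
    exact hi.1 rfl

def Dres (k r : ℕ) [NeZero (3 * k)] : Multiset (ZMod (3 * k)) :=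
  (Finset.univ.filter fun i : ZMod (3 * k) => i.val % 3 = r).val

lemma not_isDominatingMultiset_cons_erase {V : Type*} [DecidableEq V] {G : SimpleGraph V}
    {D : Multiset V} {u v w : V} (hu : u ∉ D.erase u) (hw : w ∉ D) (hwv : w ≠ v)
    (hvw : ¬ G.Adj v w) (hpriv : ∀ x ∈ D, G.Adj x w → x = u) :
    ¬ IsDominatingMultiset G (v ::ₘ D.erase u) := by
  intro hdom
  rcases hdom w with hmem | ⟨x, hx, hxw⟩
  · rcases Multiset.mem_cons.mp hmem with rfl | hmem
    · exact hwv rfl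
    · exact hw (Multiset.mem_of_mem_erase hmem)
  · rcases Multiset.mem_cons.mp hx with rfl | hx
    · exact hvw hxw
    · exact hu (hpriv x (Multiset.mem_of_mem_erase hx) hxw ▸ hx)

lemma TSReachable.eq_of_forall_tokenSlide_not_dominating {V : Type*} [DecidableEq V]
    {G : SimpleGraph V} {D D' : Multiset V} (h : TSReachable G D D')
    (hslide : ∀ E, TokenSlide G D E → ¬ IsDominatingMultiset G E) : D = D' := by
  rcases h.cases_head with heq | ⟨E, hstep, -⟩
  · exact heq
  · exact absurd hstep.2.1 (hslide E hstep.2.2)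

lemma cycleGraph_adj_iff {n : ℕ} {i j : ZMod n} :
    (cycleGraph n).Adj i j ↔ i ≠ j ∧ (j - i = 1 ∨ j - i = -1) := by
  have : i - j = 1 ↔ j - i = -1 := by rw [← neg_sub, neg_eq_iff_eq_neg]
  simp only [cycleGraph, this, or_comm]

def residueMod3 (k : ℕ) : ZMod (3 * k) →+* ZMod 3 :=
  ZMod.castHom (dvd_mul_right 3 k) (ZMod 3)

section Residues

variable {k : ℕ}

lemma mem_Dres_iff [NeZero (3 * k)] {r : ℕ} (hr : r < 3) {i : ZMod (3 * k)} :
    i ∈ Dres k r ↔ residueMod3 k i = r := by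
  simp only [Dres, Finset.mem_val, Finset.mem_filter, Finset.mem_univ, true_and, residueMod3]
  rw [ZMod.castHom_apply, ← ZMod.natCast_val, ZMod.natCast_eq_natCast_iff']
  omega

lemma Dres_nodup [NeZero (3 * k)] (r : ℕ) : (Dres k r).Nodup :=
  Finset.nodup _

lemma natCast_mem_Dres_iff [NeZero (3 * k)] {r r' : ℕ} (hr' : r' < 3) :
    (r' : ZMod (3 * k)) ∈ Dres k r ↔ r' = r := by
  have hlt : r' < 3 * k := by have := NeZero.ne (3 * k); omega
  simp only [Dres, Finset.mem_val, Finset.mem_filter, Finset.mem_univ, true_and,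
    ZMod.val_natCast_of_lt hlt, Nat.mod_eq_of_lt hr']

lemma Dres_ne [NeZero (3 * k)] {r r' : ℕ} (hr' : r' < 3) (hne : r ≠ r') :
    Dres k r' ≠ Dres k r := fun h ↦
  hne ((natCast_mem_Dres_iff hr').1 (h ▸ (natCast_mem_Dres_iff hr').2 rfl)).symm

variable {d d' : ZMod (3 * k)}

lemma residueMod3_ne_zero (hd : d = 1 ∨ d = -1) : residueMod3 k d ≠ 0 := by
  rcases hd with rfl | rfl <;> simp only [map_one, map_neg] <;> decide

lemma residueMod3_two_mul_ne_zero (hd : d = 1 ∨ d = -1) : residueMod3 k (2 * d) ≠ 0 := by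
  rcases hd with rfl | rfl <;> simp only [map_mul, map_ofNat, map_one, map_neg] <;> decide

lemma eq_of_residueMod3_eq (hd : d = 1 ∨ d = -1) (hd' : d' = 1 ∨ d' = -1)
    (h : residueMod3 k d = residueMod3 k d') : d = d' := by
  rcases hd with rfl | rfl <;> rcases hd' with rfl | rfl <;>
    first | rfl | (simp only [map_one, map_neg] at h; exact absurd h (by decide))

lemma three_ne_zero_of_two_le (hk : 2 ≤ k) : (3 : ZMod (3 * k)) ≠ 0 := by
  have h3 : ((3 : ℕ) : ZMod (3 * k)) ≠ 0 := by
    rw [Ne, ZMod.natCast_eq_zero_iff]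
    intro h
    have := Nat.le_of_dvd three_pos h
    omega
  exact_mod_cast h3

lemma two_mul_ne (hk : 2 ≤ k) (hd : d = 1 ∨ d = -1) (hd' : d' = 1 ∨ d' = -1) : 2 * d ≠ d' := by
  intro h
  rcases hd with rfl | rfl <;> rcases hd' with rfl | rfl <;>
    first
    | exact three_ne_zero_of_two_le hk (by linear_combination h)
    | exact three_ne_zero_of_two_le hk (by linear_combination -h)
    | (have h3 := congrArg (residueMod3 k) h
       simp only [map_mul, map_ofNat, map_one, map_neg] at h3
       exact absurd h3 (by decide))

lemma not_isDominatingMultiset_of_tokenSlide_Dres [NeZero (3 * k)] (hk : 2 ≤ k) {r : ℕ}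
    (hr : r < 3) {E : Multiset (ZMod (3 * k))} (h : TokenSlide (cycleGraph (3 * k)) (Dres k r) E) :
    ¬ IsDominatingMultiset (cycleGraph (3 * k)) E := by
  obtain ⟨u, v, huv, hu, rfl⟩ := h
  obtain ⟨d, rfl⟩ : ∃ d, v = u + d := ⟨v - u, by ring⟩
  have hd : d = 1 ∨ d = -1 := by simpa using (cycleGraph_adj_iff.mp huv).2
  have hres : ∀ x ∈ Dres k r, residueMod3 k x = residueMod3 k u := fun x hx =>
    ((mem_Dres_iff hr).1 hx).trans ((mem_Dres_iff hr).1 hu).symm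
  refine not_isDominatingMultiset_cons_erase (w := u - d) (Dres_nodup r).notMem_erase
    ?_ ?_ ?_ ?_
  · intro hw
    have h := hres _ hw
    rw [map_sub, sub_eq_self] at h
    exact residueMod3_ne_zero hd h
  · intro hw
    have h : 2 * d = 0 := by linear_combination -hw
    exact residueMod3_two_mul_ne_zero hd (by rw [h, map_zero])
  · intro hadj
    obtain ⟨-, h⟩ := cycleGraph_adj_iff.mp hadj.symm
    exact two_mul_ne hk hd h (by ring)
  · intro x hx hxw
    obtain ⟨-, hd'⟩ := cycleGraph_adj_iff.mp hxw.symm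
    have h := eq_of_residueMod3_eq hd' hd (by rw [map_sub, map_sub, hres x hx]; ring)
    linear_combination h

end Residues

theorem cycle_not_TSReachable_general (k : ℕ) (hk : 2 ≤ k) [NeZero (3 * k)]
    (r r' : ℕ) (hr' : r' < 3) (hne : r ≠ r') :
    ¬ TSReachable (cycleGraph (3 * k)) (Dres k r') (Dres k r) ∧
    ¬ (TokenSlide (cycleGraph (3 * k)) (Dres k r') (Dres k r) ∧
        IsDominatingMultiset (cycleGraph (3 * k)) (Dres k r)) := by
  have hslide := fun E ↦ not_isDominatingMultiset_of_tokenSlide_Dres (E := E) hk hr'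
  exact ⟨fun h ↦ Dres_ne hr' hne (h.eq_of_forall_tokenSlide_not_dominating hslide),
    fun ⟨h, hdom⟩ ↦ hslide _ h hdom⟩

/-- For `k ≥ 2` and distinct `r, r' ∈ {0,1,2}`, the dominating set `D_r` of `C_{3k}` is
not TS-reachable from `D_{r'}`; in particular no single token slide transforms `D_{r'}`
into `D_r` while keeping a dominating multiset. -/
theorem cycle_not_TSReachable (k : ℕ) (hk : 2 ≤ k) [NeZero (3 * k)]
    (r r' : ℕ) (hr : r < 3) (hr' : r' < 3) (hne : r ≠ r') :
    ¬ TSReachable (cycleGraph (3 * k)) (Dres k r') (Dres k r) ∧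
    ¬ (TokenSlide (cycleGraph (3 * k)) (Dres k r') (Dres k r) ∧
        IsDominatingMultiset (cycleGraph (3 * k)) (Dres k r)) :=
  cycle_not_TSReachable_general k hk r r' hr' hne
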